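/- Let X be a topological space and m ≥ 1. If the l1-homology groups satisfy H^{l1}_m(X) = H^{l1}_{m+1}(X) = 0, then the bounded cohomology group Ĥ^{m+1}(X) = 0. -/

import Mathlib

/-!
A cocycle `φ` vanishes on the boundaries in degree `m + 1`, hence, since `H^{ℓ¹}_{m+1}(X) = 0`,
on all of `ker ∂_{m+1}`. Since `H^{ℓ¹}_m(X) = 0` and `∂ ∘ ∂ = 0`, the range of
`∂_{m+1} : L_{m+1}(X) → L_m(X)` is the closed subspace `ker ∂_m`, so by the open mapping theorem
`φ` descends to a bounded functional on this range; a Hahn–Banach extension of it to `L_m(X)` is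
a bounded cochain `ψ` with `φ = ψ ∘ ∂_{m+1}`.
-/

open scoped ENNReal

noncomputable section

namespace L1Homology

/-- The standard topological `m`-simplex. -/
abbrev StdSpx (m : ℕ) := ↥(stdSimplex ℝ (Fin (m + 1)))

/-- The affine inclusion `Δ^m → Δ^{m+1}` of the face opposite to the `i`-th vertex. -/
def faceMap {m : ℕ} (i : Fin (m + 2)) : C(StdSpx m, StdSpx (m + 1)) where
  toFun x := ⟨fun j => ∑ k ∈ Finset.univ.filter (fun k => i.succAbove k = j), x.1 k,
    ⟨fun j => Finset.sum_nonneg fun k _ => x.2.1 k, by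
      rw [Finset.sum_fiberwise_of_maps_to (fun k _ => Finset.mem_univ (i.succAbove k)) x.1]
      exact x.2.2⟩⟩
  continuous_toFun := Continuous.subtype_mk
    (continuous_pi fun j => continuous_finset_sum _ fun k _ =>
      (continuous_apply k).comp continuous_subtype_val) _

variable (X : Type*) [TopologicalSpace X]

/-- Singular `m`-simplices of `X`. -/
abbrev SingSimplex (m : ℕ) := C(StdSpx m, X)

variable {X}

/-- The `i`-th face of a singular `(m+1)`-simplex. -/
def face {m : ℕ} (i : Fin (m + 2)) (s : SingSimplex X (m + 1)) : SingSimplex X m :=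
  s.comp (faceMap i)

/-- `L_m(X)`: the space of `ℓ¹`-chains of degree `m`, i.e. the completion of the space of
real singular `m`-chains in the `ℓ¹`-norm, realised as the Banach space of summable
real-valued functions on the set of singular `m`-simplices. -/
abbrev L1C (X : Type*) [TopologicalSpace X] (m : ℕ) :=
  lp (fun _ : SingSimplex X m => ℝ) 1

/-- Push-forward of an `ℓ¹`-function along a map of index sets (summing over fibers). -/
def pushCore {S T : Type*} (g : S → T) (f : lp (fun _ : S => ℝ) 1) (t : T) : ℝ :=
  ∑' s : {s : S // g s = t}, f s.1

theorem summable_norm_coe {S : Type*} (f : lp (fun _ : S => ℝ) 1) :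
    Summable fun s : S => ‖f s‖ := by
  simpa [ENNReal.toReal_one] using (lp.memℓp f).summable (by simp)

theorem summable_sigma_norm_coe {S T : Type*} (g : S → T) (f : lp (fun _ : S => ℝ) 1) :
    Summable fun x : Σ t : T, {s : S // g s = t} => ‖f x.2.1‖ :=
  (Equiv.sigmaFiberEquiv g).summable_iff.mpr (summable_norm_coe f)

theorem summable_norm_pushCore {S T : Type*} (g : S → T) (f : lp (fun _ : S => ℝ) 1) :
    Summable fun t => ‖pushCore g f t‖ := by
  refine Summable.of_nonneg_of_le (fun t => norm_nonneg _)
    (fun t => norm_tsum_le_tsum_norm ((summable_sigma_norm_coe g f).sigma_factor t))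
    (summable_sigma_norm_coe g f).sigma

theorem memℓp_pushCore {S T : Type*} (g : S → T) (f : lp (fun _ : S => ℝ) 1) :
    Memℓp (pushCore g f) (1 : ℝ≥0∞) :=
  memℓp_gen (by simpa [ENNReal.toReal_one] using summable_norm_pushCore g f)

/-- Push-forward `ℓ¹(S) → ℓ¹(T)` along `g : S → T`. -/
def push {S T : Type*} (g : S → T) (f : lp (fun _ : S => ℝ) 1) : lp (fun _ : T => ℝ) 1 :=
  ⟨pushCore g f, memℓp_pushCore g f⟩

/-- The boundary operator `∂ : L_{m+1}(X) → L_m(X)`, the continuous extension of the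
singular boundary: `∂ = ∑ i, (-1)^i (face i)_*`. -/
def bd (m : ℕ) : L1C X (m + 1) → L1C X m := fun f =>
  ∑ i : Fin (m + 2), ((-1 : ℝ) ^ (i : ℕ)) • push (face i) f


end L1Homology

theorem Fin.succ_succAbove_succAbove_of_le {m : ℕ} {i j : Fin (m + 2)} (h : i ≤ j)
    (k : Fin (m + 1)) :
    j.succ.succAbove (i.succAbove k) = i.castSucc.succAbove (j.succAbove k) := by
  simpa [SimplexCategory.δ] using
    congrArg (fun f => f.toOrderHom k) (SimplexCategory.δ_comp_δ h)

theorem Fin.sum_sum_neg_one_pow_smul_eq_zero {R M : Type*} [CommRing R] [AddCommGroup M]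
    [Module R M] {m : ℕ} (δ : Fin (m + 2) → Fin (m + 3) → M)
    (hδ : ∀ i j : Fin (m + 2), i ≤ j → δ i j.succ = δ j i.castSucc) :
    ∑ i : Fin (m + 2), ∑ j : Fin (m + 3), (-1 : R) ^ ((i : ℕ) + j) • δ i j = 0 := by
  rw [← Finset.sum_product', Finset.univ_product_univ]
  let S : Finset (Fin (m + 2) × Fin (m + 3)) := {ij | (ij.2 : ℕ) ≤ ij.1}
  rw [← Finset.sum_add_sum_compl S, ← eq_neg_iff_add_eq_zero, ← Finset.sum_neg_distrib]
  have mem_S {ij} : ij ∈ S ↔ (ij.2 : ℕ) ≤ ij.1 := by simp [S]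
  have mem_Sc {ij} : ij ∈ Sᶜ ↔ (ij.1 : ℕ) < ij.2 := by simp [S]
  -- the term at `(i, j)` with `j ≤ i` cancels the one at `(j, i + 1)`
  refine Finset.sum_bij'
    (fun ij h => (ij.2.castLT (by have := mem_S.mp h; omega), ij.1.succ))
    (fun ij h => (ij.2.pred (by have := mem_Sc.mp h; rintro h0; simp [h0] at this),
      ij.1.castSucc))
    (fun ij h => mem_Sc.mpr <| by
      have := mem_S.mp h; simp only [Fin.val_castLT, Fin.val_succ]; omega)
    (fun ij h => mem_S.mpr <| by
      have := mem_Sc.mp h; simp only [Fin.val_castSucc, Fin.val_pred]; omega)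
    (fun ij h => by simp) (fun ij h => by simp) (fun ⟨i, j⟩ h => ?_)
  dsimp only
  rw [hδ _ _ (Fin.le_def.mpr (mem_S.mp h)), Fin.castSucc_castLT, ← neg_smul, Fin.val_succ,
    Fin.val_castLT]
  congr 1
  ring

namespace ContinuousLinearMap

theorem exists_comp_eq_of_surjective {𝕜 E F G : Type*} [NontriviallyNormedField 𝕜]
    [NormedAddCommGroup E] [NormedSpace 𝕜 E] [CompleteSpace E]
    [NormedAddCommGroup F] [NormedSpace 𝕜 F] [CompleteSpace F]
    [AddCommGroup G] [Module 𝕜 G] [TopologicalSpace G]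
    (T : E →L[𝕜] F) (hT : Function.Surjective T) (φ : E →L[𝕜] G)
    (hφ : LinearMap.ker (T : E →ₗ[𝕜] F) ≤ LinearMap.ker (φ : E →ₗ[𝕜] G)) :
    ∃ ψ : F →L[𝕜] G, ψ.comp T = φ := by
  let ψ : F →ₗ[𝕜] G := (LinearMap.ker (T : E →ₗ[𝕜] F)).liftQ φ hφ ∘ₗ
    ((T : E →ₗ[𝕜] F).quotKerEquivOfSurjective hT).symm.toLinearMap
  have hψ : ∀ x, ψ (T x) = φ x := fun x => by
    simp [ψ, ← coe_coe, LinearMap.quotKerEquivOfSurjective_symm_apply]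
  -- by the open mapping theorem `T` is a quotient map
  have hcont : Continuous ψ := (T.isQuotientMap hT).continuous_iff.mpr <| by
    simpa only [Function.comp_def, hψ] using φ.continuous
  exact ⟨⟨ψ, hcont⟩, ext hψ⟩

theorem exists_comp_eq_of_isClosed_range {𝕜 E F : Type*} [RCLike 𝕜]
    [NormedAddCommGroup E] [NormedSpace 𝕜 E] [CompleteSpace E]
    [NormedAddCommGroup F] [NormedSpace 𝕜 F] [CompleteSpace F]
    (T : E →L[𝕜] F) (hT : IsClosed (Set.range T)) (φ : StrongDual 𝕜 E)
    (hφ : LinearMap.ker (T : E →ₗ[𝕜] F) ≤ LinearMap.ker (φ : E →ₗ[𝕜] 𝕜)) :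
    ∃ ψ : StrongDual 𝕜 F, ψ.comp T = φ := by
  let K := LinearMap.range (T : E →ₗ[𝕜] F)
  have : CompleteSpace K := hT.completeSpace_coe
  let T' : E →L[𝕜] K := T.codRestrict K (LinearMap.mem_range_self (T : E →ₗ[𝕜] F))
  obtain ⟨ψ₀, hψ₀⟩ := T'.exists_comp_eq_of_surjective (fun ⟨_, x, hx⟩ => ⟨x, Subtype.ext hx⟩)
    φ fun x hx => hφ (congrArg Subtype.val hx)
  obtain ⟨ψ, hψ, -⟩ := exists_extension_norm_eq K ψ₀
  exact ⟨ψ, by rw [← hψ₀]; ext x; exact hψ (T' x)⟩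

end ContinuousLinearMap

namespace L1Homology

section Push

variable {S T U : Type*}

theorem summable_fiber (g : S → T) (f : lp (fun _ : S => ℝ) 1) (t : T) :
    Summable fun s : {s : S // g s = t} => f s.1 :=
  Summable.of_norm ((summable_sigma_norm_coe g f).sigma_factor t)

theorem push_add (g : S → T) (f f' : lp (fun _ : S => ℝ) 1) :
    push g (f + f') = push g f + push g f' := by
  ext t
  show pushCore g (f + f') t = pushCore g f t + pushCore g f' t
  rw [pushCore, pushCore, pushCore, ← (summable_fiber g f t).tsum_add (summable_fiber g f' t)]
  rfl

theorem push_smul (g : S → T) (a : ℝ) (f : lp (fun _ : S => ℝ) 1) :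
    push g (a • f) = a • push g f := by
  ext t
  show pushCore g (a • f) t = a * pushCore g f t
  exact tsum_mul_left

theorem norm_lp_one_eq_tsum (f : lp (fun _ : S => ℝ) 1) : ‖f‖ = ∑' s, ‖f s‖ := by
  simp [lp.norm_eq_tsum_rpow (by norm_num : 0 < (1 : ℝ≥0∞).toReal) f]

theorem norm_push_le (g : S → T) (f : lp (fun _ : S => ℝ) 1) : ‖push g f‖ ≤ ‖f‖ := by
  have hf := summable_sigma_norm_coe g f
  rw [norm_lp_one_eq_tsum, norm_lp_one_eq_tsum]
  calc ∑' t, ‖push g f t‖ ≤ ∑' t, ∑' s : {s : S // g s = t}, ‖f s.1‖ :=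
        (summable_norm_pushCore g f).tsum_le_tsum
          (fun t => norm_tsum_le_tsum_norm (hf.sigma_factor t)) hf.sigma
    _ = ∑' x : Σ t : T, {s : S // g s = t}, ‖f x.2.1‖ := hf.tsum_sigma.symm
    _ = ∑' s, ‖f s‖ := (Equiv.sigmaFiberEquiv g).tsum_eq fun s => ‖f s‖

def pushCLM (g : S → T) : lp (fun _ : S => ℝ) 1 →L[ℝ] lp (fun _ : T => ℝ) 1 :=
  LinearMap.mkContinuous
    { toFun := push g
      map_add' := push_add g
      map_smul' := push_smul g } 1
    (fun f => by simpa using norm_push_le g f)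

@[simp]
theorem coe_pushCLM (g : S → T) : ⇑(pushCLM g) = push g := rfl

def fiberCompEquiv (g : T → U) (h : S → T) (u : U) :
    (Σ t : {t : T // g t = u}, {s : S // h s = t.1}) ≃ {s : S // g (h s) = u} where
  toFun p := ⟨p.2.1, by rw [p.2.2, p.1.2]⟩
  invFun s := ⟨⟨h s.1, s.2⟩, ⟨s.1, rfl⟩⟩
  left_inv := by rintro ⟨⟨t, ht⟩, ⟨s, hs⟩⟩; cases hs; rfl
  right_inv _ := rfl

theorem push_push (g : T → U) (h : S → T) (f : lp (fun _ : S => ℝ) 1) :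
    push g (push h f) = push (g ∘ h) f := by
  ext u
  have hf : Summable fun p : Σ t : {t : T // g t = u}, {s : S // h s = t.1} => f p.2.1 :=
    (fiberCompEquiv g h u).summable_iff.mpr (summable_fiber (g ∘ h) f u)
  calc ∑' t : {t : T // g t = u}, ∑' s : {s : S // h s = t.1}, f s.1
      = ∑' p : Σ t : {t : T // g t = u}, {s : S // h s = t.1}, f p.2.1 := hf.tsum_sigma.symm
    _ = ∑' s : {s : S // g (h s) = u}, f s.1 := (fiberCompEquiv g h u).tsum_eq fun s => f s.1

end Push

section Simplicial

theorem faceMap_apply {m : ℕ} (i : Fin (m + 2)) (x : StdSpx m) (j : Fin (m + 2)) :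
    faceMap i x j = ∑ k with i.succAbove k = j, x k := rfl

theorem faceMap_faceMap_apply {m : ℕ} (J : Fin (m + 3)) (i : Fin (m + 2)) (x : StdSpx m)
    (l : Fin (m + 3)) :
    faceMap J (faceMap i x) l = ∑ k with J.succAbove (i.succAbove k) = l, x k := by
  simp only [faceMap_apply, Finset.sum_fiberwise_eq_sum_filter]
  simp

theorem faceMap_comp_faceMap {m : ℕ} {i j : Fin (m + 2)} (h : i ≤ j) :
    (faceMap j.succ).comp (faceMap i) = (faceMap i.castSucc).comp (faceMap j) := by
  ext x l
  simp only [ContinuousMap.comp_apply, faceMap_faceMap_apply,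
    Fin.succ_succAbove_succAbove_of_le h]

variable {X : Type*} [TopologicalSpace X]

theorem face_face {m : ℕ} {i j : Fin (m + 2)} (h : i ≤ j) (s : SingSimplex X (m + 2)) :
    face i (face j.succ s) = face j (face i.castSucc s) := by
  simp only [face, ContinuousMap.comp_assoc, faceMap_comp_faceMap h]

end Simplicial

variable {X : Type*} [TopologicalSpace X]

def bdCLM (m : ℕ) : L1C X (m + 1) →L[ℝ] L1C X m :=
  ∑ i : Fin (m + 2), ((-1 : ℝ) ^ (i : ℕ)) • pushCLM (face i)

theorem coe_bdCLM (m : ℕ) : ⇑(bdCLM (X := X) m) = bd m := by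
  ext f : 1
  simp [bdCLM, bd]

theorem bd_bd (m : ℕ) (f : L1C X (m + 2)) : bd m (bd (m + 1) f) = 0 := by
  rw [← Fin.sum_sum_neg_one_pow_smul_eq_zero (R := ℝ) (fun i j => push (face i ∘ face j) f)
    fun i j h => by simp_rw [Function.comp_def, face_face h]]
  simp only [bd, ← coe_pushCLM, map_sum, map_smul, Finset.smul_sum, smul_smul, pow_add]
  simp only [coe_pushCLM, push_push]

theorem range_bdCLM_eq_ker {m : ℕ}
    (h : ∀ c : L1C X (m + 1), bd m c = 0 → ∃ e : L1C X (m + 2), bd (m + 1) e = c) :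
    Set.range (bdCLM (X := X) (m + 1)) =
      LinearMap.ker (bdCLM (X := X) m : L1C X (m + 1) →ₗ[ℝ] L1C X m) := by
  ext c
  simp only [SetLike.mem_coe, LinearMap.mem_ker, ContinuousLinearMap.coe_coe, coe_bdCLM]
  constructor
  · rintro ⟨e, rfl⟩
    exact bd_bd m e
  · exact h c

/-- **Theorem (Matsumoto–Morita).**  Let `X` be a topological space and `m ≥ 1` (below
`m = k + 1`).  If the `ℓ¹`-homology groups vanish, `H^{ℓ¹}_m(X) = H^{ℓ¹}_{m+1}(X) = 0`
(every cycle of `L_•(X)` in these degrees is a boundary), then the bounded cohomology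
group `Ĥ^{m+1}(X)` vanishes: every cocycle in the Banach dual `B^{m+1}(X)` of
`L_{m+1}(X)` (with coboundary the adjoint of the boundary) is a coboundary. -/
theorem boundedCohomology_vanishes_of_l1Homology_vanishes
    (X : Type*) [TopologicalSpace X] (k : ℕ)
    -- `H^{ℓ¹}_{k+1}(X) = 0`
    (h₁ : ∀ c : L1C X (k + 1), bd k c = 0 → ∃ e : L1C X (k + 2), bd (k + 1) e = c)
    -- `H^{ℓ¹}_{k+2}(X) = 0`
    (h₂ : ∀ c : L1C X (k + 2), bd (k + 1) c = 0 → ∃ e : L1C X (k + 3), bd (k + 2) e = c) :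
    -- `Ĥ^{k+2}(X) = 0`
    ∀ φ : StrongDual ℝ (L1C X (k + 2)),
      (∀ c : L1C X (k + 3), φ (bd (k + 2) c) = 0) →
      ∃ ψ : StrongDual ℝ (L1C X (k + 1)), ∀ c : L1C X (k + 2), φ c = ψ (bd (k + 1) c) := by
  intro φ hφ
  have hker : LinearMap.ker (bdCLM (X := X) (k + 1) : L1C X (k + 2) →ₗ[ℝ] L1C X (k + 1)) ≤
      LinearMap.ker (φ : L1C X (k + 2) →ₗ[ℝ] ℝ) := fun c hc => by
    obtain ⟨e, rfl⟩ := h₂ c (by simpa [coe_bdCLM] using hc)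
    exact hφ e
  have hclosed : IsClosed (Set.range (bdCLM (X := X) (k + 1))) := by
    rw [range_bdCLM_eq_ker h₁]
    exact (bdCLM k).isClosed_ker
  obtain ⟨ψ, hψ⟩ := (bdCLM (k + 1)).exists_comp_eq_of_isClosed_range hclosed φ hker
  exact ⟨ψ, fun c => by rw [← hψ, ContinuousLinearMap.comp_apply, coe_bdCLM]⟩

end L1Homology

end
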